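/- arXiv:0709.3186 — 7 statements merged into one kernel-verified Lean document; each statement's English description precedes it below -/
import Mathlib

section
/- Let w_k ≥ w_0 > 0 and let u ∈ ℓ^p with 1 ≤ p < ∞. Then there exists δ > 0 such that for all h ∈ ℓ^p with ‖h‖_p < δ, soft-thresholding satisfies exactly S_w(u+h) - S_w(u) - G(u+h)h = 0, where (G(v)h)_k = h_k if |v_k| > w_k and 0 if |v_k| ≤ w_k. In particular, S_w : ℓ^p → ℓ^q is Newton (slantly) differentiable at every point with slanting function G, for any 1 ≤ q ≤ ∞. -/
open scoped ENNReal

/-- Scalar soft-thresholding: `S_w(x) = max(0, |x| - w) · sign(x)`. -/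
noncomputable def softThresh (w x : ℝ) : ℝ := max 0 (|x| - w) * Real.sign x

lemma soft_zero {w x : ℝ} (h : |x| ≤ w) : max 0 (|x| - w) * Real.sign x = 0 := by
  rw [max_eq_left (by linarith)]; ring

lemma soft_pos {w x : ℝ} (hw : 0 < w) (h : w < x) :
    max 0 (|x| - w) * Real.sign x = x - w := by
  rw [abs_of_pos (by linarith), Real.sign_of_pos (by linarith),
    max_eq_right (by linarith)]; ring

lemma soft_neg {w x : ℝ} (hw : 0 < w) (h : x < -w) :
    max 0 (|x| - w) * Real.sign x = x + w := by
  rw [abs_of_neg (by linarith), Real.sign_of_neg (by linarith),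
    max_eq_right (by linarith)]; ring

lemma scalar_key (w u h : ℝ) (hw : 0 < w) (h1 : |h| < w)
    (h2 : |u| = w ∨ |h| < abs (|u| - w)) :
    max 0 (|u + h| - w) * Real.sign (u + h) - max 0 (|u| - w) * Real.sign u -
      (if w < |u + h| then h else 0) = 0 := by
  obtain ⟨ha1, ha2⟩ := abs_lt.mp h1
  rcases lt_trichotomy (|u|) w with hu | hu | hu
  · have h2' : |h| < w - |u| := by
      rcases h2 with h2 | h2
      · linarith
      · rw [abs_of_neg (show |u| - w < 0 by linarith)] at h2; linarith
    have hlt : |u + h| < w := (abs_add_le _ _).trans_lt (by linarith)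
    rw [if_neg (by linarith), soft_zero hlt.le, soft_zero hu.le]; ring
  · have hsz : max 0 (|u| - w) * Real.sign u = 0 := soft_zero hu.le
    rcases (abs_eq hw.le).mp hu with hq | hq
    · by_cases hc : w < |u + h|
      · have hpos : (0:ℝ) < u + h := by linarith
        have hc' : w < u + h := by rwa [abs_of_pos hpos] at hc
        rw [if_pos hc, soft_pos hw hc', hsz]; linarith
      · rw [if_neg hc, soft_zero (not_lt.mp hc), hsz]; ring
    · by_cases hc : w < |u + h|
      · have hneg : u + h < 0 := by linarith
        have hc' : u + h < -w := by rw [abs_of_neg hneg] at hc; linarith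
        rw [if_pos hc, soft_neg hw hc', hsz]; linarith
      · rw [if_neg hc, soft_zero (not_lt.mp hc), hsz]; ring
  · have h2' : |h| < |u| - w := by
      rcases h2 with h2 | h2
      · linarith
      · rwa [abs_of_pos (show (0:ℝ) < |u| - w by linarith)] at h2
    obtain ⟨hb1, hb2⟩ := abs_lt.mp h2'
    rcases lt_abs.mp hu with hu' | hu'
    · have hau : |u| = u := abs_of_pos (by linarith)
      rw [hau] at hb1 hb2
      have hc : w < u + h := by linarith
      rw [if_pos (by rw [abs_of_pos (by linarith)]; exact hc),
        soft_pos hw hc, soft_pos hw hu']; ring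
    · have hau : |u| = -u := abs_of_neg (by linarith)
      rw [hau] at hb1 hb2
      have hc : u + h < -w := by linarith
      rw [if_pos (by rw [abs_of_neg (by linarith)]; linarith),
        soft_neg hw hc, soft_neg hw (by linarith)]; ring

/-- For weights `w_k ≥ w_0 > 0` and `u ∈ ℓᵖ` (`1 ≤ p < ∞`), there is `δ > 0` such that
for all `h ∈ ℓᵖ` with `‖h‖_p < δ`, the soft-thresholding remainder
`S_w(u+h) - S_w(u) - G(u+h)h` vanishes identically, where `(G(v)h)_k = h_k` if
`|v_k| > w_k` and `= 0` if `|v_k| ≤ w_k`.  In particular `S_w : ℓᵖ → ℓ^q` is Newton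
(slantly) differentiable at every point, with slanting function `G`, for any `q`. -/
theorem stmt_5 (p : ℝ≥0∞) (hp : 1 ≤ p) (hp' : p ≠ ∞)
    (w : ℕ → ℝ) (w0 : ℝ) (hw0 : 0 < w0) (hw : ∀ k, w0 ≤ w k)
    (u : lp (fun _ : ℕ => ℝ) p) :
    ∃ δ > (0 : ℝ), ∀ h : lp (fun _ : ℕ => ℝ) p, ‖h‖ < δ →
      ∀ k, softThresh (w k) (u k + h k) - softThresh (w k) (u k) -
        (if w k < |u k + h k| then h k else 0) = 0 := by
  have hp0 : p ≠ 0 := fun hz => by simp [hz] at hp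
  have hpr : 0 < p.toReal := ENNReal.toReal_pos hp0 hp'
  have hsum : Summable (fun k => ‖u k‖ ^ p.toReal) := (lp.memℓp u).summable hpr
  have hfin : {k : ℕ | w0 / 2 ≤ |u k|}.Finite := by
    have hev := hsum.tendsto_cofinite_zero.eventually_lt_const
      (show (0:ℝ) < (w0 / 2) ^ p.toReal by positivity)
    refine (Filter.eventually_cofinite.mp hev).subset fun k hk => ?_
    simp only [Set.mem_setOf_eq, not_lt, Real.norm_eq_abs]
    exact Real.rpow_le_rpow (by positivity) hk (le_of_lt hpr)
  set ε : ℕ → ℝ := fun k => if |u k| = w k then w k else abs (|u k| - w k) with hε_def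
  have hε : ∀ k, 0 < ε k := by
    intro k
    by_cases hq : |u k| = w k
    · simpa [hε_def, hq] using lt_of_lt_of_le hw0 (hw k)
    · simp only [hε_def, if_neg hq]
      exact abs_pos.mpr (sub_ne_zero.mpr hq)
  set F := hfin.toFinset with hF_def
  obtain ⟨d, hd0, hd⟩ : ∃ d, 0 < d ∧ ∀ k ∈ F, d ≤ ε k := by
    rcases F.eq_empty_or_nonempty with hF | hF
    · exact ⟨1, one_pos, by simp [hF]⟩
    · exact ⟨F.inf' hF ε, (Finset.lt_inf'_iff hF).mpr fun k _ => hε k,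
        fun k hk => Finset.inf'_le ε hk⟩
  refine ⟨min (w0 / 2) d, by positivity, fun h hh k => ?_⟩
  have hk1 : |h k| < min (w0 / 2) d :=
    lt_of_le_of_lt (by simpa [Real.norm_eq_abs] using lp.norm_apply_le_norm hp0 h k) hh
  have hkw0 : |h k| < w0 / 2 := lt_of_lt_of_le hk1 (min_le_left _ _)
  have hkd : |h k| < d := lt_of_lt_of_le hk1 (min_le_right _ _)
  have hwk : 0 < w k := lt_of_lt_of_le hw0 (hw k)
  have hk2 : |h k| < w k := by linarith [hw k]
  simp only [softThresh]
  refine scalar_key (w k) (u k) (h k) hwk hk2 ?_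
  by_cases hq : |u k| = w k
  · exact Or.inl hq
  · refine Or.inr ?_
    by_cases hkF : k ∈ F
    · have := hd k hkF
      rw [hε_def] at this
      simp only [if_neg hq] at this
      linarith
    · have hsmall : |u k| < w0 / 2 := by
        by_contra hcon
        exact hkF (hfin.mem_toFinset.mpr (not_lt.mp hcon))
      have : |u k| < w k := by linarith [hw k]
      rw [abs_of_neg (show |u k| - w k < 0 by linarith)]
      linarith [hw k]
end

section
/- The candidate slanting function G for the max operation fails: let 1 ≤ p < ∞, let u ∈ ℓ^p be a sequence with infinitely many nonzero entries, and define G(v)h coordinatewise as h_k if v_k > 0, δ·h_k if v_k = 0 (for any fixed δ ∈ ℝ), and 0 if v_k < 0. Then for h^n defined by h^n_k = -2u_k if k = n and 0 otherwise, one has ‖h^n‖_p → 0, while for every n with u_n ≠ 0: ‖max(u + h^n, 0) - max(u, 0) - G(u + h^n)h^n‖_q / ‖h^n‖_p = 1/2. Hence G is not a slanting function for u ↦ max(u,0) from ℓ^p to ℓ^q. -/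
/-!
Moving `u` to `u + hⁿ` flips the sign of the single coordinate `u_n`, so on that coordinate the
candidate `G(u + hⁿ)` uses the branch belonging to `-u_n` instead of the one belonging to `u_n`,
and the remainder there is `-|u_n|` whatever `δ` is; all other coordinates contribute nothing.
Hence remainder and increment are both single-coordinate sequences, of norms `|u_n|` and
`2|u_n|`, and the increments still tend to `0` because `u_n → 0` for `u ∈ ℓᵖ`, `p < ∞`.
-/

open scoped ENNReal
open Filter Topology

theorem lp.norm_mk_of_eq_single {α : Type*} [DecidableEq α] {E : α → Type*}
    [∀ i, NormedAddCommGroup (E i)] {p : ℝ≥0∞} (hp : 0 < p) {f : ∀ i, E i} (hf : Memℓp f p)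
    {i : α} {x : E i} (h : f = Pi.single i x) :
    ‖(⟨f, hf⟩ : lp E p)‖ = ‖x‖ := by
  have : (⟨f, hf⟩ : lp E p) = lp.single p i x := Subtype.ext h
  rw [this, lp.norm_single hp]

theorem Memℓp.tendsto_norm_cofinite_zero {α : Type*} {E : α → Type*}
    [∀ i, NormedAddCommGroup (E i)] {p : ℝ≥0∞} {f : ∀ i, E i} (hf : Memℓp f p)
    (hp : 0 < p.toReal) :
    Tendsto (fun i => ‖f i‖) cofinite (𝓝 0) := by
  have hpow : Tendsto (fun i => ‖f i‖ ^ p.toReal) cofinite (𝓝 0) :=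
    (hf.summable hp).tendsto_cofinite_zero
  have hroot := hpow.rpow_const (p := p.toReal⁻¹) (Or.inr (inv_nonneg.mpr hp.le))
  rw [Real.zero_rpow (inv_ne_zero hp.ne')] at hroot
  refine hroot.congr fun i => ?_
  rw [← Real.rpow_mul (norm_nonneg _), mul_inv_cancel₀ hp.ne', Real.rpow_one]

/-- One coordinate of `max(v + h, 0) - max(v, 0) - G(v + h) h`, where `G(w)` multiplies by
`1`, `δ` or `0` according as `w > 0`, `w = 0` or `w < 0`. -/
noncomputable def maxSlantRemainder (δ a h : ℝ) : ℝ :=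
  max (a + h) 0 - max a 0 - (if 0 < a + h then h else if a + h = 0 then δ * h else 0)

@[simp]
theorem maxSlantRemainder_zero (δ a : ℝ) : maxSlantRemainder δ a 0 = 0 := by
  by_cases ha : 0 < a
  · simp [maxSlantRemainder, ha]
  · simp [maxSlantRemainder, ha, max_eq_right (not_lt.mp ha)]

theorem maxSlantRemainder_neg_two_mul (δ : ℝ) {a : ℝ} (ha : a ≠ 0) :
    maxSlantRemainder δ a (-2 * a) = -|a| := by
  have hsum : a + -2 * a = -a := by ring
  rw [maxSlantRemainder, hsum]
  rcases ha.lt_or_gt with hneg | hpos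
  · rw [if_pos (neg_pos.mpr hneg), max_eq_left (by linarith), max_eq_right hneg.le,
      abs_of_neg hneg]
    ring
  · rw [if_neg (by linarith), if_neg (by linarith), max_eq_right (by linarith),
      max_eq_left hpos.le, abs_of_pos hpos]
    ring

theorem stmt_6_general (p q : ℝ≥0∞) (hp : 1 ≤ p) (hp' : p ≠ ∞) (hq : 1 ≤ q)
    (δ : ℝ) (u : lp (fun _ : ℕ => ℝ) p)
    -- `hⁿ` and the Newton remainder `N n = max(u+hⁿ,0) - max(u,0) - G(u+hⁿ)hⁿ`:
    (hseq : ℕ → ℕ → ℝ) (hhseq : ∀ n k, hseq n k = if k = n then -2 * u k else 0)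
    (N : ℕ → ℕ → ℝ)
    (hN : ∀ n k, N n k = max (u k + hseq n k) 0 - max (u k) 0 -
        (if 0 < u k + hseq n k then hseq n k
         else if u k + hseq n k = 0 then δ * hseq n k else 0)) :
    -- `‖hⁿ‖_p = 2|u_n|` and this tends to `0`,
    (∀ n, ∀ hmem : Memℓp (hseq n) p,
        ‖(⟨hseq n, hmem⟩ : lp (fun _ : ℕ => ℝ) p)‖ = 2 * |u n|) ∧
    Filter.Tendsto (fun n => 2 * |u n|) Filter.atTop (nhds 0) ∧
    -- while the remainder quotient is identically `1/2` on `{n | u n ≠ 0}`: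
    ∀ n, u n ≠ 0 → ∀ hmemN : Memℓp (N n) q,
        ‖(⟨N n, hmemN⟩ : lp (fun _ : ℕ => ℝ) q)‖ / (2 * |u n|) = 1 / 2 := by
  have hseq_eq n : hseq n = Pi.single n (-2 * u n) := by
    ext k
    rw [hhseq, Pi.single_apply]
    split_ifs with hk <;> simp only [hk]
  refine ⟨fun n hmem => ?_, ?_, fun n hn hmemN => ?_⟩
  · rw [lp.norm_mk_of_eq_single (zero_lt_one.trans_le hp) hmem (hseq_eq n), norm_mul,
      Real.norm_eq_abs, Real.norm_eq_abs, abs_neg, abs_two]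
  · have hp0 : 0 < p.toReal := ENNReal.toReal_pos (zero_lt_one.trans_le hp).ne' hp'
    have hu0 := (lp.memℓp u).tendsto_norm_cofinite_zero hp0
    rw [Nat.cofinite_eq_atTop] at hu0
    simpa using hu0.const_mul 2
  · have hN_eq : N n = Pi.single n (-|u n|) := by
      ext k
      rw [hN, ← maxSlantRemainder, hseq_eq, Pi.single_apply, Pi.single_apply]
      split_ifs with hk
      · subst hk
        exact maxSlantRemainder_neg_two_mul δ hn
      · exact maxSlantRemainder_zero δ (u k)
    rw [lp.norm_mk_of_eq_single (zero_lt_one.trans_le hq) hmemN hN_eq, Real.norm_eq_abs,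
      abs_neg, abs_abs]
    field_simp [abs_ne_zero.mpr hn]

/-- The candidate slanting function `G` for `v ↦ max(v,0)` on sequence spaces fails:
for `u ∈ ℓᵖ` with infinitely many nonzero entries and `hⁿ` the sequence that equals
`-2·u_n` at coordinate `n` and `0` elsewhere, one has `‖hⁿ‖_p = 2|u_n| → 0`, while the
Newton-difference remainder satisfies
`‖max(u+hⁿ,0) - max(u,0) - G(u+hⁿ)hⁿ‖_q / ‖hⁿ‖_p = 1/2` whenever `u_n ≠ 0`.
Hence `G` is not a slanting function for `max(·,0) : ℓᵖ → ℓ^q`. -/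
theorem stmt_6 (p q : ℝ≥0∞) (hp : 1 ≤ p) (hp' : p ≠ ∞) (hq : 1 ≤ q)
    (δ : ℝ) (u : lp (fun _ : ℕ => ℝ) p)
    (hu : {k | u k ≠ 0}.Infinite)
    -- `hⁿ` and the Newton remainder `N n = max(u+hⁿ,0) - max(u,0) - G(u+hⁿ)hⁿ`:
    (hseq : ℕ → ℕ → ℝ) (hhseq : ∀ n k, hseq n k = if k = n then -2 * u k else 0)
    (N : ℕ → ℕ → ℝ)
    (hN : ∀ n k, N n k = max (u k + hseq n k) 0 - max (u k) 0 -
        (if 0 < u k + hseq n k then hseq n k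
         else if u k + hseq n k = 0 then δ * hseq n k else 0)) :
    -- `‖hⁿ‖_p = 2|u_n|` and this tends to `0`,
    (∀ n, ∀ hmem : Memℓp (hseq n) p,
        ‖(⟨hseq n, hmem⟩ : lp (fun _ : ℕ => ℝ) p)‖ = 2 * |u n|) ∧
    Filter.Tendsto (fun n => 2 * |u n|) Filter.atTop (nhds 0) ∧
    -- while the remainder quotient is identically `1/2` on `{n | u n ≠ 0}`:
    ∀ n, u n ≠ 0 → ∀ hmemN : Memℓp (N n) q,
        ‖(⟨N n, hmemN⟩ : lp (fun _ : ℕ => ℝ) q)‖ / (2 * |u n|) = 1 / 2 :=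
  stmt_6_general p q hp hp' hq δ u hseq hhseq N hN
end

section
/- Let K : ℓ² → H be a bounded linear injective operator into a real Hilbert space H, f ∈ H, and w_k ≥ w_0 > 0. Then the functional Ψ(u) = ½‖Ku - f‖²_H + ∑_k w_k|u_k| has a unique minimizer over ℓ² (where Ψ(u) = +∞ if the sum diverges). -/
/-!
Existence is a compactness argument in the product topology of `ℕ → ℝ`. Since
`Ψ(0) = ½‖f‖²` and `∑ w_k |u_k| ≥ w₀ ‖u‖₁`, only the closed `ℓ¹`-ball of radius `‖f‖² / (2 w₀)`
matters; it lies in `ℓ²` and is compact for the product topology. On it every functional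
`u ↦ ⟪K u, y⟫ = ∑ u_k z_k` (`z ∈ ℓ²` its Riesz representative, so `z → 0`) is a uniform limit
of finite sums, hence continuous, so `‖K u - f‖`, a supremum of such functionals, is lower
semicontinuous; so is the penalty, a sum of nonnegative continuous terms, and `Ψ` attains its
minimum on the ball.
Uniqueness: by the parallelogram law and injectivity of `K`, the midpoint of two distinct
minimizers would have a strictly smaller value.
-/

open scoped ENNReal

/-- `ℓ²`: square-summable real sequences. -/
noncomputable abbrev ellTwo := lp (fun _ : ℕ => ℝ) 2

/-- The Tikhonov functional `Ψ(u) = ½‖Ku - f‖² + ∑_k w_k |u_k|`, with value `+∞`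
when the penalty series diverges. -/
noncomputable def Psi {H : Type*} [NormedAddCommGroup H] [InnerProductSpace ℝ H]
    (K : ellTwo →L[ℝ] H) (f : H) (w : ℕ → ℝ) (u : ellTwo) : ℝ≥0∞ :=
  ENNReal.ofReal (‖K u - f‖ ^ 2 / 2) + ∑' k, ENNReal.ofReal (w k * |u k|)

open Filter Topology

theorem Memℓp.tendsto_atTop_zero {E : Type*} [NormedAddCommGroup E] {z : ℕ → E} {p : ℝ≥0∞}
    (hz : Memℓp z p) (hp : 0 < p.toReal) : Tendsto z atTop (𝓝 0) := by
  have hpow : Tendsto (fun k => ‖z k‖ ^ p.toReal) atTop (𝓝 0) :=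
    (hz.summable hp).tendsto_atTop_zero
  have hroot :=
    (Real.continuousAt_rpow_const 0 p.toReal⁻¹ (Or.inr (by positivity))).tendsto.comp hpow
  rw [Real.zero_rpow (inv_ne_zero hp.ne')] at hroot
  refine tendsto_zero_iff_norm_tendsto_zero.mpr (hroot.congr fun k => ?_)
  exact Real.rpow_rpow_inv (norm_nonneg _) hp.ne'

lemma lowerSemicontinuous_norm_of_continuous_inner {X H : Type*} [TopologicalSpace X]
    [NormedAddCommGroup H] [InnerProductSpace ℝ H] {x : X → H}
    (hx : ∀ y, Continuous fun a => inner ℝ (x a) y) : LowerSemicontinuous fun a => ‖x a‖ := by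
  intro a t (ht : t < ‖x a‖)
  rcases eq_or_ne (x a) 0 with ha | ha
  · rw [ha, norm_zero] at ht
    exact Eventually.of_forall fun b => ht.trans_le (norm_nonneg _)
  · set y := ‖x a‖⁻¹ • x a
    have hy : ‖y‖ = 1 := norm_smul_inv_norm ha
    have hay : inner ℝ (x a) y = ‖x a‖ := by
      rw [real_inner_smul_right, real_inner_self_eq_norm_sq]
      field_simp
    filter_upwards [(hx y).continuousAt.eventually_const_lt (hay ▸ ht)] with b hb
    simpa [hy] using hb.trans_le (real_inner_le_norm (x b) y)

lemma norm_sq_midpoint_lt {E : Type*} [NormedAddCommGroup E] [InnerProductSpace ℝ E] {a b : E}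
    (hab : a ≠ b) : ‖(2 : ℝ)⁻¹ • (a + b)‖ ^ 2 < (‖a‖ ^ 2 + ‖b‖ ^ 2) / 2 := by
  have hpar := parallelogram_law_with_norm ℝ a b
  have hsub : 0 < ‖a - b‖ := norm_pos_iff.mpr (sub_ne_zero.mpr hab)
  rw [norm_smul, mul_pow, Real.norm_eq_abs, abs_inv, abs_two]
  nlinarith

/-- Phrased with finite sums, so that membership needs no summability side condition (a divergent
`tsum` would be `0`) and the set is an intersection of closed sets in the product topology. -/
def l1ClosedBall (C : ℝ) : Set (ℕ → ℝ) := {v | ∀ s : Finset ℕ, ∑ k ∈ s, |v k| ≤ C}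

section l1ClosedBall

variable {C : ℝ} {v : ℕ → ℝ}

lemma zero_mem_l1ClosedBall (hC : 0 ≤ C) : 0 ∈ l1ClosedBall C := by
  simpa [l1ClosedBall] using hC

lemma abs_le_of_mem_l1ClosedBall (hv : v ∈ l1ClosedBall C) (k : ℕ) : |v k| ≤ C := by
  simpa using hv {k}

lemma summable_abs_of_mem_l1ClosedBall (hv : v ∈ l1ClosedBall C) : Summable fun k => |v k| :=
  summable_of_sum_le (fun k => abs_nonneg (v k)) fun s => hv s

lemma memℓp_of_mem_l1ClosedBall (hv : v ∈ l1ClosedBall C) {p : ℝ≥0∞} (hp : 1 ≤ p) :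
    Memℓp v p :=
  (memℓp_gen' (C := C) fun s => by simpa using hv s).of_exponent_ge hp

lemma isCompact_l1ClosedBall : IsCompact (l1ClosedBall C) := by
  have hclosed : IsClosed (l1ClosedBall C) := by
    simp only [l1ClosedBall, Set.ofPred_forall]
    exact isClosed_iInter fun s => isClosed_le (by fun_prop) continuous_const
  refine (isCompact_univ_pi fun _ => isCompact_Icc (a := -C) (b := C)).of_isClosed_subset
    hclosed fun v hv k _ => abs_le.mp (abs_le_of_mem_l1ClosedBall hv k)

lemma summable_mul_of_mem_l1ClosedBall (hv : v ∈ l1ClosedBall C) {z : ℕ → ℝ}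
    (hz : Tendsto z atTop (𝓝 0)) : Summable fun k => v k * z k := by
  refine (summable_abs_of_mem_l1ClosedBall hv).of_norm_bounded_eventually ?_
  rw [Nat.cofinite_eq_atTop]
  filter_upwards [hz.abs.eventually_le_const (u := 1) (by simp)] with k hk
  simpa [abs_mul] using mul_le_of_le_one_right (abs_nonneg (v k)) (by simpa using hk)

lemma abs_tsum_mul_sub_sum_range_le (hv : v ∈ l1ClosedBall C) {z : ℕ → ℝ}
    (hz : Tendsto z atTop (𝓝 0)) {n : ℕ} {δ : ℝ} (hzδ : ∀ k ≥ n, |z k| ≤ δ) :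
    |∑' k, v k * z k - ∑ k ∈ Finset.range n, v k * z k| ≤ δ * C := by
  have hsum := summable_mul_of_mem_l1ClosedBall hv hz
  have htail : Summable fun i => ‖v (i + n) * z (i + n)‖ :=
    (summable_nat_add_iff n).mpr hsum.norm
  have hδ : 0 ≤ δ := (abs_nonneg _).trans (hzδ n le_rfl)
  rw [← hsum.sum_add_tsum_nat_add n, add_sub_cancel_left,
    ← Real.norm_eq_abs (∑' i, v (i + n) * z (i + n))]
  refine (norm_tsum_le_tsum_norm htail).trans
    (Real.tsum_le_of_sum_le (fun i => norm_nonneg _) fun s => ?_)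
  calc ∑ i ∈ s, ‖v (i + n) * z (i + n)‖ ≤ ∑ i ∈ s, δ * |v (i + n)| :=
        Finset.sum_le_sum fun i _ => by
          rw [Real.norm_eq_abs, abs_mul, mul_comm]
          exact mul_le_mul_of_nonneg_right (hzδ _ (Nat.le_add_left n i)) (abs_nonneg _)
    _ = δ * ∑ k ∈ s.map (addRightEmbedding n), |v k| := by
        rw [Finset.sum_map, Finset.mul_sum]
        rfl
    _ ≤ δ * C := mul_le_mul_of_nonneg_left (hv _) hδ

lemma continuousOn_tsum_mul_l1ClosedBall {z : ℕ → ℝ} (hz : Tendsto z atTop (𝓝 0)) :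
    ContinuousOn (fun v : ℕ → ℝ => ∑' k, v k * z k) (l1ClosedBall C) := by
  refine TendstoUniformlyOn.continuousOn (p := atTop)
    (F := fun n v => ∑ k ∈ Finset.range n, v k * z k) ?_
    (Frequently.of_forall fun n => by fun_prop)
  rw [Metric.tendstoUniformlyOn_iff]
  intro ε hε
  set δ := ε / (|C| + 1)
  have hδ : 0 < δ := by positivity
  have hδC : δ * C < ε := by
    calc δ * C ≤ δ * |C| := mul_le_mul_of_nonneg_left (le_abs_self C) hδ.le
      _ < δ * (|C| + 1) := by gcongr; linarith
      _ = ε := div_mul_cancel₀ ε (by positivity)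
  obtain ⟨N, hN⟩ := eventually_atTop.mp (hz.abs.eventually_le_const (u := δ) (by simpa using hδ))
  filter_upwards [eventually_ge_atTop N] with n hn v hv
  rw [Real.dist_eq]
  exact (abs_tsum_mul_sub_sum_range_le hv hz fun k hk => by
    simpa using hN k (hn.trans hk)).trans_lt hδC

end l1ClosedBall

noncomputable def penalty (w v : ℕ → ℝ) : ℝ≥0∞ := ∑' k, ENNReal.ofReal (w k * |v k|)

lemma lowerSemicontinuous_penalty (w : ℕ → ℝ) : LowerSemicontinuous (penalty w) :=
  lowerSemicontinuous_tsum fun k =>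
    (ENNReal.continuous_ofReal.comp (by fun_prop)).lowerSemicontinuous

lemma ofReal_mul_lt_penalty {w v : ℕ → ℝ} {w0 C : ℝ} (hw0 : 0 < w0) (hw : ∀ k, w0 ≤ w k)
    (hC : 0 ≤ C) (hv : v ∉ l1ClosedBall C) : ENNReal.ofReal (w0 * C) < penalty w v := by
  obtain ⟨s, hs⟩ : ∃ s : Finset ℕ, C < ∑ k ∈ s, |v k| := by
    simpa [l1ClosedBall] using hv
  calc ENNReal.ofReal (w0 * C) < ENNReal.ofReal (∑ k ∈ s, w0 * |v k|) := by
        rw [ENNReal.ofReal_lt_ofReal_iff', ← Finset.mul_sum]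
        exact ⟨by gcongr, mul_pos hw0 (hC.trans_lt hs)⟩
    _ = ∑ k ∈ s, ENNReal.ofReal (w0 * |v k|) :=
        ENNReal.ofReal_sum_of_nonneg fun k _ => by positivity
    _ ≤ ∑ k ∈ s, ENNReal.ofReal (w k * |v k|) :=
        Finset.sum_le_sum fun k _ => ENNReal.ofReal_le_ofReal (by gcongr; exact hw k)
    _ ≤ penalty w v := ENNReal.sum_le_tsum s

lemma penalty_midpoint_le {w : ℕ → ℝ} (hw : ∀ k, 0 ≤ w k) (a b : ℕ → ℝ) :
    penalty w ((2 : ℝ)⁻¹ • (a + b)) ≤ (penalty w a + penalty w b) / 2 := by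
  have hpt (k : ℕ) : ENNReal.ofReal (w k * |((2 : ℝ)⁻¹ • (a + b)) k|)
      ≤ (ENNReal.ofReal (w k * |a k|) + ENNReal.ofReal (w k * |b k|)) / 2 := by
    have hab := abs_add_le (a k) (b k)
    calc ENNReal.ofReal (w k * |((2 : ℝ)⁻¹ • (a + b)) k|)
        ≤ ENNReal.ofReal ((w k * |a k| + w k * |b k|) / 2) := by
          refine ENNReal.ofReal_le_ofReal ?_
          simp only [Pi.smul_apply, Pi.add_apply, smul_eq_mul, abs_mul, abs_inv, abs_two]
          nlinarith [hw k]
      _ = _ := by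
          rw [ENNReal.ofReal_div_of_pos two_pos, ENNReal.ofReal_ofNat,
            ENNReal.ofReal_add (mul_nonneg (hw k) (abs_nonneg _))
              (mul_nonneg (hw k) (abs_nonneg _))]
  calc penalty w ((2 : ℝ)⁻¹ • (a + b))
      ≤ ∑' k, (ENNReal.ofReal (w k * |a k|) + ENNReal.ofReal (w k * |b k|)) / 2 :=
        ENNReal.tsum_le_tsum hpt
    _ = (penalty w a + penalty w b) / 2 := by
        simp only [div_eq_mul_inv, ENNReal.tsum_mul_right, ENNReal.tsum_add, penalty]

section Tikhonov

variable {H : Type*} [NormedAddCommGroup H] [InnerProductSpace ℝ H]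

lemma exists_tendsto_zero_inner_eq_tsum (K : ellTwo →L[ℝ] H) (y : H) :
    ∃ z : ℕ → ℝ, Tendsto z atTop (𝓝 0) ∧ ∀ u : ellTwo, inner ℝ (K u) y = ∑' k, u k * z k := by
  set r : ellTwo := (InnerProductSpace.toDual ℝ ellTwo).symm ((innerSL ℝ y).comp K)
  refine ⟨r, (lp.memℓp r).tendsto_atTop_zero (by norm_num), fun u => ?_⟩
  have hr : inner ℝ r u = inner ℝ y (K u) := InnerProductSpace.toDual_symm_apply
  rw [real_inner_comm, ← hr, real_inner_comm, lp.inner_eq_tsum]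
  simp [mul_comm]

noncomputable def toEllTwo {C : ℝ} (v : l1ClosedBall C) : ellTwo :=
  ⟨v.1, memℓp_of_mem_l1ClosedBall v.2 one_le_two⟩

lemma lowerSemicontinuous_psi_toEllTwo (K : ellTwo →L[ℝ] H) (f : H) (w : ℕ → ℝ) (C : ℝ) :
    LowerSemicontinuous fun v : l1ClosedBall C => Psi K f w (toEllTwo v) := by
  have hinner (y : H) : Continuous fun v : l1ClosedBall C => inner ℝ (K (toEllTwo v) - f) y := by
    obtain ⟨z, hz, hKz⟩ := exists_tendsto_zero_inner_eq_tsum K y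
    simp only [inner_sub_left, hKz]
    exact (continuousOn_iff_continuous_domRestrict.mp (continuousOn_tsum_mul_l1ClosedBall hz)).sub
      continuous_const
  have hdata : LowerSemicontinuous fun v : l1ClosedBall C =>
      ENNReal.ofReal (‖K (toEllTwo v) - f‖ ^ 2 / 2) := by
    have hmono : Monotone fun t : ℝ => ENNReal.ofReal (max t 0 ^ 2 / 2) := fun s t hst =>
      ENNReal.ofReal_le_ofReal (by gcongr)
    convert (ENNReal.continuous_ofReal.comp (by fun_prop)).comp_lowerSemicontinuous
      (lowerSemicontinuous_norm_of_continuous_inner hinner) hmono using 3 with v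
    simp
  exact hdata.add ((lowerSemicontinuous_penalty w).comp continuous_subtype_val)

theorem exists_forall_psi_le (K : ellTwo →L[ℝ] H) (f : H) {w : ℕ → ℝ} {w0 : ℝ} (hw0 : 0 < w0)
    (hw : ∀ k, w0 ≤ w k) : ∃ ubar : ellTwo, ∀ u : ellTwo, Psi K f w ubar ≤ Psi K f w u := by
  set C := ‖f‖ ^ 2 / 2 / w0
  have hC : 0 ≤ C := by positivity
  have hpsi_zero : Psi K f w 0 = ENNReal.ofReal (w0 * C) := by
    simp [Psi, C, mul_div_cancel₀ _ hw0.ne']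
  have : CompactSpace (l1ClosedBall C) := isCompact_iff_compactSpace.mp isCompact_l1ClosedBall
  obtain ⟨vbar, -, hvbar⟩ := ((lowerSemicontinuous_psi_toEllTwo K f w C).lowerSemicontinuousOn
    Set.univ).exists_isMinOn ⟨⟨0, zero_mem_l1ClosedBall hC⟩, Set.mem_univ _⟩ isCompact_univ
  refine ⟨toEllTwo vbar, fun u => ?_⟩
  by_cases hu : ⇑u ∈ l1ClosedBall C
  · have hu' : toEllTwo (⟨u, hu⟩ : l1ClosedBall C) = u := Subtype.ext rfl
    exact hu' ▸ hvbar (Set.mem_univ _)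
  · have h0 : toEllTwo (⟨0, zero_mem_l1ClosedBall hC⟩ : l1ClosedBall C) = 0 := Subtype.ext rfl
    refine le_of_lt ?_
    calc Psi K f w (toEllTwo vbar) ≤ Psi K f w 0 := h0 ▸ hvbar (Set.mem_univ _)
      _ < penalty w u := hpsi_zero ▸ ofReal_mul_lt_penalty hw0 hw hC hu
      _ ≤ Psi K f w u := le_add_self
lemma psi_midpoint_lt {K : ellTwo →L[ℝ] H} (hK : Function.Injective K) (f : H) {w : ℕ → ℝ}
    (hw : ∀ k, 0 ≤ w k) {u v : ellTwo} (huv : u ≠ v) (hu : Psi K f w u ≠ ⊤)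
    (hv : Psi K f w v ≠ ⊤) :
    Psi K f w ((2 : ℝ)⁻¹ • (u + v)) < (Psi K f w u + Psi K f w v) / 2 := by
  have hdata : ENNReal.ofReal (‖K ((2 : ℝ)⁻¹ • (u + v)) - f‖ ^ 2 / 2)
      < (ENNReal.ofReal (‖K u - f‖ ^ 2 / 2) + ENNReal.ofReal (‖K v - f‖ ^ 2 / 2)) / 2 := by
    have hKm : K ((2 : ℝ)⁻¹ • (u + v)) - f = (2 : ℝ)⁻¹ • ((K u - f) + (K v - f)) := by
      rw [map_smul, map_add]
      module
    have hne : K u - f ≠ K v - f := fun h => huv (hK (sub_left_injective h))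
    calc _ < ENNReal.ofReal ((‖K u - f‖ ^ 2 / 2 + ‖K v - f‖ ^ 2 / 2) / 2) := by
          rw [ENNReal.ofReal_lt_ofReal_iff_of_nonneg (by positivity), hKm]
          linarith [norm_sq_midpoint_lt hne]
      _ = _ := by
          rw [ENNReal.ofReal_div_of_pos two_pos, ENNReal.ofReal_ofNat,
            ENNReal.ofReal_add (by positivity) (by positivity)]
  have hpen : penalty w ⇑((2 : ℝ)⁻¹ • (u + v)) ≤ (penalty w u + penalty w v) / 2 := by
    rw [lp.coeFn_smul, lp.coeFn_add]
    exact penalty_midpoint_le hw u v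
  have hpen_ne_top : penalty w ⇑((2 : ℝ)⁻¹ • (u + v)) ≠ ⊤ :=
    ne_top_of_le_ne_top (ENNReal.div_ne_top (ENNReal.add_ne_top.2
      ⟨ne_top_of_le_ne_top hu le_add_self, ne_top_of_le_ne_top hv le_add_self⟩) two_ne_zero) hpen
  calc Psi K f w ((2 : ℝ)⁻¹ • (u + v))
      < (ENNReal.ofReal (‖K u - f‖ ^ 2 / 2) + ENNReal.ofReal (‖K v - f‖ ^ 2 / 2)) / 2
        + (penalty w u + penalty w v) / 2 :=
        ENNReal.add_lt_add_of_lt_of_le hpen_ne_top hdata hpen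
    _ = (Psi K f w u + Psi K f w v) / 2 := by
        rw [← ENNReal.add_div, add_add_add_comm]
        rfl

lemma eq_of_forall_psi_le {K : ellTwo →L[ℝ] H} (hK : Function.Injective K) (f : H)
    {w : ℕ → ℝ} (hw : ∀ k, 0 ≤ w k) {u v : ellTwo} (hu : ∀ u', Psi K f w u ≤ Psi K f w u')
    (hv : ∀ v', Psi K f w v ≤ Psi K f w v') : u = v := by
  by_contra huv
  have hfin : Psi K f w u ≠ ⊤ := ne_top_of_le_ne_top (by simp [Psi]) (hu 0)
  have heq : Psi K f w v = Psi K f w u := le_antisymm (hv u) (hu v)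
  have hlt := psi_midpoint_lt hK f hw huv hfin (heq ▸ hfin)
  rw [heq, ENNReal.add_div, ENNReal.add_halves] at hlt
  exact (hu _).not_gt hlt

end Tikhonov

theorem stmt_10_general {H : Type*} [NormedAddCommGroup H] [InnerProductSpace ℝ H]
    (K : ellTwo →L[ℝ] H) (hK : Function.Injective K) (f : H)
    (w : ℕ → ℝ) (w0 : ℝ) (hw0 : 0 < w0) (hw : ∀ k, w0 ≤ w k) :
    ∃! ubar : ellTwo, ∀ u : ellTwo, Psi K f w ubar ≤ Psi K f w u := by
  obtain ⟨ubar, hubar⟩ := exists_forall_psi_le K f hw0 hw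
  exact ⟨ubar, hubar, fun u hu => eq_of_forall_psi_le hK f (fun k => hw0.le.trans (hw k)) hu hubar⟩

/-- For `K : ℓ² → H` bounded linear and injective, `f ∈ H` and weights
`w_k ≥ w_0 > 0`, the functional `Ψ` has a unique minimizer over `ℓ²`. -/
theorem stmt_10 {H : Type*} [NormedAddCommGroup H] [InnerProductSpace ℝ H]
    [CompleteSpace H]
    (K : ellTwo →L[ℝ] H) (hK : Function.Injective K) (f : H)
    (w : ℕ → ℝ) (w0 : ℝ) (hw0 : 0 < w0) (hw : ∀ k, w0 ≤ w k) :
    ∃! ubar : ellTwo, ∀ u : ellTwo, Psi K f w ubar ≤ Psi K f w u :=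
  stmt_10_general K hK f w w0 hw0 hw
end

section
/- With K : ℓ² → H bounded linear injective, f ∈ H, w_k ≥ w_0 > 0, and γ > 0: a point ū ∈ ℓ² minimizes Ψ(u) = ½‖Ku - f‖² + ∑_k w_k|u_k| if and only if ū = S_{γw}(ū - γK*(Kū - f)), where S_{γw} is coordinatewise soft-thresholding with weights γw_k. -/
open scoped ENNReal

/-!
Write `a = K*(Kū - f)`. Since `½‖Ku - f‖² = ½‖Kū - f‖² + ⟪a, u - ū⟫ + ½‖K(u - ū)‖²`, the point `ū`
minimizes `Ψ` iff every coordinate `ū_k` minimizes the scalar convex function `y ↦ a_k y + w_k |y|`.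
Necessity: moving only the `k`-th coordinate gives this up to an error `O((y - ū_k)²)`, which
convexity removes. Sufficiency: summing the scalar inequalities gives
`Ψ(u) - Ψ(ū) ≥ ½‖K(u - ū)‖²`. Finally, `x` minimizes `y ↦ a y + w |y|` iff `-γa ∈ γw ∂|·|(x)`, the
optimality condition of the proximal map of `γw |·|`, whose unique solution is soft-thresholding;
so this is the fixed-point equation `x = S_{γw}(x - γa)`.
-/

open Set Filter Topology
open scoped InnerProductSpace
open ContinuousLinearMap (adjoint)

theorem ConvexOn.le_of_forall_le_add_mul_norm_sq {E : Type*} [NormedAddCommGroup E]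
    [NormedSpace ℝ E] {φ : E → ℝ} (hφ : ConvexOn ℝ univ φ) {c : ℝ} {x : E}
    (h : ∀ y, φ x ≤ φ y + c * ‖y - x‖ ^ 2) (y : E) : φ x ≤ φ y := by
  -- test `h` at `(1 - s) • x + s • y`, use convexity, divide by `s` and let `s → 0`
  have hs : ∀ s ∈ Ioo (0 : ℝ) 1, φ x ≤ φ y + c * s * ‖y - x‖ ^ 2 := by
    rintro s ⟨hs0, hs1⟩
    have hconv := hφ.2 (mem_univ x) (mem_univ y) (sub_pos.2 hs1).le hs0.le (sub_add_cancel 1 s)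
    have hz := h ((1 - s) • x + s • y)
    have hd : (1 - s) • x + s • y - x = s • (y - x) := by
      rw [smul_sub, sub_smul, one_smul]; abel
    rw [hd, norm_smul, Real.norm_of_nonneg hs0.le] at hz
    rw [smul_eq_mul, smul_eq_mul] at hconv
    have : s * φ x ≤ s * (φ y + c * s * ‖y - x‖ ^ 2) := by nlinarith
    exact le_of_mul_le_mul_left this hs0
  have hlim : Tendsto (fun s => φ y + c * s * ‖y - x‖ ^ 2) (𝓝[>] 0) (𝓝 (φ y)) := by
    have : Continuous fun s : ℝ => φ y + c * s * ‖y - x‖ ^ 2 := by fun_prop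
    simpa using (this.tendsto 0).mono_left nhdsWithin_le_nhds
  exact ge_of_tendsto hlim (mem_of_superset (Ioo_mem_nhdsGT one_pos) hs)

theorem convexOn_mul_add_mul_abs {a w : ℝ} (hw : 0 ≤ w) :
    ConvexOn ℝ univ fun z : ℝ => a * z + w * |z| :=
  ((LinearMap.mul ℝ ℝ a).convexOn convex_univ).add ((convexOn_norm convex_univ).smul hw)

theorem le_mul_add_mul_abs {a w x : ℝ} (hx : a * x + w * |x| = 0) (ha : |a| ≤ w) (z : ℝ) :
    a * x + w * |x| ≤ a * z + w * |z| := by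
  rw [hx]
  have := neg_abs_le (a * z)
  rw [abs_mul] at this
  nlinarith [abs_nonneg z]

theorem softThresh_of_abs_le {τ y : ℝ} (h : |y| ≤ τ) : softThresh τ y = 0 := by
  rw [softThresh, max_eq_left (sub_nonpos.2 h), zero_mul]

theorem softThresh_of_lt {τ y : ℝ} (hτ : 0 ≤ τ) (h : τ < y) : softThresh τ y = y - τ := by
  have hy : 0 < y := hτ.trans_lt h
  rw [softThresh, abs_of_pos hy, max_eq_right (by linarith), Real.sign_of_pos hy, mul_one]

theorem softThresh_of_lt_neg {τ y : ℝ} (hτ : 0 ≤ τ) (h : y < -τ) : softThresh τ y = y + τ := by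
  have hy : y < 0 := h.trans_le (neg_nonpos.2 hτ)
  rw [softThresh, abs_of_neg hy, max_eq_right (by linarith), Real.sign_of_neg hy]
  ring

theorem softThresh_sub_mul_add_mul_abs_le {τ y : ℝ} (hτ : 0 ≤ τ) (z : ℝ) :
    (softThresh τ y - y) * softThresh τ y + τ * |softThresh τ y| ≤
      (softThresh τ y - y) * z + τ * |z| := by
  rcases lt_or_ge τ y with h | h
  · rw [softThresh_of_lt hτ h]
    exact le_mul_add_mul_abs (by rw [abs_of_pos (by linarith)]; ring)
      (by simp [abs_of_nonneg hτ]) z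
  rcases lt_or_ge y (-τ) with h' | h'
  · rw [softThresh_of_lt_neg hτ h']
    exact le_mul_add_mul_abs (by rw [abs_of_neg (by linarith)]; ring)
      (by simp [abs_of_nonneg hτ]) z
  · rw [softThresh_of_abs_le (abs_le.2 ⟨h', h⟩)]
    exact le_mul_add_mul_abs (by simp) (by simpa using abs_le.2 ⟨h', h⟩) z

theorem softThresh_eq_iff {τ y x : ℝ} (hτ : 0 ≤ τ) :
    softThresh τ y = x ↔ ∀ z, (x - y) * x + τ * |x| ≤ (x - y) * z + τ * |z| := by
  refine ⟨?_, fun hx => ?_⟩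
  · rintro rfl
    exact softThresh_sub_mul_add_mul_abs_le hτ
  · -- the two optimality inequalities add up to `(softThresh τ y - x)² ≤ 0`
    have h₁ := hx (softThresh τ y)
    have h₂ := softThresh_sub_mul_add_mul_abs_le (y := y) hτ x
    nlinarith [sq_nonneg (softThresh τ y - x)]

theorem eq_softThresh_sub_iff {γ w a x : ℝ} (hγ : 0 < γ) (hw : 0 ≤ w) :
    x = softThresh (γ * w) (x - γ * a) ↔ ∀ z, a * x + w * |x| ≤ a * z + w * |z| := by
  rw [eq_comm, softThresh_eq_iff (mul_nonneg hγ.le hw), sub_sub_cancel]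
  have hscale : ∀ t, γ * a * t + γ * w * |t| = γ * (a * t + w * |t|) := fun t => by ring
  simp only [hscale, mul_le_mul_iff_right₀ hγ]

theorem norm_apply_sub_sq_eq {E F : Type*} [NormedAddCommGroup E] [InnerProductSpace ℝ E]
    [CompleteSpace E] [NormedAddCommGroup F] [InnerProductSpace ℝ F] [CompleteSpace F]
    (K : E →L[ℝ] F) (f : F) (u v : E) :
    ‖K u - f‖ ^ 2 = ‖K v - f‖ ^ 2 + 2 * ⟪adjoint K (K v - f), u - v⟫_ℝ + ‖K (u - v)‖ ^ 2 := by
  rw [ContinuousLinearMap.adjoint_inner_left, ← norm_add_sq_real, map_sub]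
  congr 2
  abel

/-- The real penalty term of `Psi`; `0` (junk value) when the series diverges. -/
noncomputable def l1Penalty (w : ℕ → ℝ) (u : ellTwo) : ℝ := ∑' k, w k * |u k|

theorem coe_add_single_sub_eq_update (u : ellTwo) (k : ℕ) (y : ℝ) :
    ⇑(u + lp.single 2 k (y - u k) : ellTwo) = Function.update u k y := by
  ext j
  rcases eq_or_ne j k with rfl | hj
  · simp
  · simp [hj]

section Psi

variable {H : Type*} [NormedAddCommGroup H] [InnerProductSpace ℝ H]
  (K : ellTwo →L[ℝ] H) (f : H) {w : ℕ → ℝ}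

theorem Psi_eq_ofReal (hw : ∀ k, 0 ≤ w k) {u : ellTwo} (hu : Summable fun k => w k * |u k|) :
    Psi K f w u = ENNReal.ofReal (‖K u - f‖ ^ 2 / 2 + l1Penalty w u) := by
  have hnn : ∀ k, 0 ≤ w k * |u k| := fun k => mul_nonneg (hw k) (abs_nonneg _)
  rw [Psi, ← ENNReal.ofReal_tsum_of_nonneg hnn hu,
    ← ENNReal.ofReal_add (by positivity) (tsum_nonneg hnn), l1Penalty]

theorem summable_of_Psi_ne_top (hw : ∀ k, 0 ≤ w k) {u : ellTwo} (h : Psi K f w u ≠ ⊤) :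
    Summable fun k => w k * |u k| := by
  have hsum : ∑' k, ENNReal.ofReal (w k * |u k|) ≠ ⊤ := ne_top_of_le_ne_top h le_add_self
  simpa only [ENNReal.toReal_ofReal (mul_nonneg (hw _) (abs_nonneg _))] using
    ENNReal.summable_toReal hsum

theorem Psi_zero_ne_top : Psi K f w 0 ≠ ⊤ := by
  simp [Psi]

theorem Psi_le_Psi_iff (hw : ∀ k, 0 ≤ w k) {u v : ellTwo} (hu : Summable fun k => w k * |u k|)
    (hv : Summable fun k => w k * |v k|) :
    Psi K f w u ≤ Psi K f w v ↔
      ‖K u - f‖ ^ 2 / 2 + l1Penalty w u ≤ ‖K v - f‖ ^ 2 / 2 + l1Penalty w v := by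
  rw [Psi_eq_ofReal K f hw hu, Psi_eq_ofReal K f hw hv]
  exact ENNReal.ofReal_le_ofReal_iff
    (add_nonneg (by positivity) (tsum_nonneg fun k => mul_nonneg (hw k) (abs_nonneg _)))

variable [CompleteSpace H]

theorem le_mul_add_mul_abs_of_isMin_Psi (hw : ∀ k, 0 ≤ w k) {ubar : ellTwo}
    (hmin : ∀ u, Psi K f w ubar ≤ Psi K f w u) (k : ℕ) (y : ℝ) :
    adjoint K (K ubar - f) k * ubar k + w k * |ubar k| ≤
      adjoint K (K ubar - f) k * y + w k * |y| := by
  have hsum := summable_of_Psi_ne_top K f hw (ne_top_of_le_ne_top (Psi_zero_ne_top K f) (hmin 0))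
  refine (convexOn_mul_add_mul_abs (hw k)).le_of_forall_le_add_mul_norm_sq (c := ‖K‖ ^ 2 / 2)
    (fun z => ?_) y
  set d : ellTwo := lp.single 2 k (z - ubar k)
  have hupd : HasSum (fun j => w j * |(ubar + d : ellTwo) j|)
      (w k * |z| - w k * |ubar k| + l1Penalty w ubar) := by
    have h := hsum.hasSum.update k (w k * |z|)
    rw [← funext (Function.apply_update (fun j t => w j * |t|) (⇑ubar) k z)] at h
    rwa [coe_add_single_sub_eq_update]
  have hle := (Psi_le_Psi_iff K f hw hsum hupd.summable).1 (hmin (ubar + d))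
  rw [show l1Penalty w (ubar + d) = _ from hupd.tsum_eq, norm_apply_sub_sq_eq K f (ubar + d) ubar,
    add_sub_cancel_left, lp.inner_single_right, RCLike.inner_apply', conj_trivial] at hle
  have hKd : ‖K d‖ ≤ ‖K‖ * |z - ubar k| :=
    (K.le_opNorm d).trans_eq (by rw [lp.norm_single (by norm_num), Real.norm_eq_abs])
  rw [Real.norm_eq_abs, sq_abs]
  nlinarith [abs_nonneg (z - ubar k), norm_nonneg (K d), sq_abs (z - ubar k)]

theorem Psi_le_of_le_mul_add_mul_abs (hw : ∀ k, 0 ≤ w k) {ubar : ellTwo}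
    (hcoord : ∀ k y, adjoint K (K ubar - f) k * ubar k + w k * |ubar k| ≤
      adjoint K (K ubar - f) k * y + w k * |y|) (u : ellTwo) :
    Psi K f w ubar ≤ Psi K f w u := by
  set A := adjoint K (K ubar - f)
  rcases eq_or_ne (Psi K f w u) ⊤ with htop | hfin
  · exact htop ▸ le_top
  have hu := summable_of_Psi_ne_top K f hw hfin
  have hinner : HasSum (fun k => A k * (u k - ubar k)) ⟪A, u - ubar⟫_ℝ := by
    simpa only [lp.coeFn_sub, Pi.sub_apply, RCLike.inner_apply', conj_trivial] using
      lp.hasSum_inner (𝕜 := ℝ) A (u - ubar)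
  have hterm : ∀ k, 0 ≤ A k * (u k - ubar k) + (w k * |u k| - w k * |ubar k|) := fun k => by
    linarith [hcoord k (u k)]
  have hubar : Summable fun k => w k * |ubar k| :=
    .of_nonneg_of_le (fun k => mul_nonneg (hw k) (abs_nonneg _))
      (fun k => by linarith [hterm k]) (hinner.summable.add hu)
  have hgap : 0 ≤ ⟪A, u - ubar⟫_ℝ + (l1Penalty w u - l1Penalty w ubar) := by
    rw [← hinner.tsum_eq, l1Penalty, l1Penalty, ← hu.tsum_sub hubar,
      ← hinner.summable.tsum_add (hu.sub hubar)]
    exact tsum_nonneg hterm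
  rw [Psi_le_Psi_iff K f hw hubar hu, norm_apply_sub_sq_eq K f u ubar]
  nlinarith [sq_nonneg ‖K (u - ubar)‖]

theorem forall_Psi_le_iff (hw : ∀ k, 0 ≤ w k) (ubar : ellTwo) :
    (∀ u, Psi K f w ubar ≤ Psi K f w u) ↔
      ∀ k y, adjoint K (K ubar - f) k * ubar k + w k * |ubar k| ≤
        adjoint K (K ubar - f) k * y + w k * |y| :=
  ⟨le_mul_add_mul_abs_of_isMin_Psi K f hw, Psi_le_of_le_mul_add_mul_abs K f hw⟩

end Psi

theorem stmt_11_general {H : Type*} [NormedAddCommGroup H] [InnerProductSpace ℝ H]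
    [CompleteSpace H]
    (K : ellTwo →L[ℝ] H) (f : H)
    (w : ℕ → ℝ) (w0 : ℝ) (hw0 : 0 < w0) (hw : ∀ k, w0 ≤ w k)
    (γ : ℝ) (hγ : 0 < γ) (ubar : ellTwo) :
    (∀ u : ellTwo, Psi K f w ubar ≤ Psi K f w u) ↔
      ∀ k, ubar k = softThresh (γ * w k)
        (ubar k - γ * (ContinuousLinearMap.adjoint K (K ubar - f)) k) := by
  have hw_nonneg : ∀ k, 0 ≤ w k := fun k => hw0.le.trans (hw k)
  simp only [eq_softThresh_sub_iff hγ (hw_nonneg _)]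
  exact forall_Psi_le_iff K f hw_nonneg ubar

/-- `ū` minimizes `Ψ` iff `ū = S_{γw}(ū - γ K*(Kū - f))` (coordinatewise),
for a given `γ > 0`. -/
theorem stmt_11 {H : Type*} [NormedAddCommGroup H] [InnerProductSpace ℝ H]
    [CompleteSpace H]
    (K : ellTwo →L[ℝ] H) (hK : Function.Injective K) (f : H)
    (w : ℕ → ℝ) (w0 : ℝ) (hw0 : 0 < w0) (hw : ∀ k, w0 ≤ w k)
    (γ : ℝ) (hγ : 0 < γ) (ubar : ellTwo) :
    (∀ u : ellTwo, Psi K f w ubar ≤ Psi K f w u) ↔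
      ∀ k, ubar k = softThresh (γ * w k)
        (ubar k - γ * (ContinuousLinearMap.adjoint K (K ubar - f)) k) :=
  stmt_11_general K f w w0 hw0 hw γ hγ ubar
end

section
/- Under the hypotheses of the previous statement, the unique minimizer ū of Ψ(u) = ½‖Ku - f‖² + ∑_k w_k|u_k| over ℓ² is a finitely supported sequence. -/
open scoped ENNReal

/-! Perturbing a minimizer `ū` of `Ψ` in a single coordinate `k` with `ū k ≠ 0` by `c eₖ` changes
`Ψ` by `c ⟪Kū - f, K eₖ⟫ + c² ‖K eₖ‖² / 2 + w k (|ū k + c| - |ū k|)`; letting `c → 0` against the sign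
of `ū k` gives `w₀ ≤ w k ≤ |⟪Kū - f, K eₖ⟫|`. By Riesz, `⟪Kū - f, K eₖ⟫` is the `k`-th coordinate of
an element of `ℓ²`, so this happens for only finitely many `k`. -/

open scoped Topology
open Filter

theorem Memℓp.finite_setOf_le_norm {ι : Type*} {E : ι → Type*} [∀ i, NormedAddCommGroup (E i)]
    {p : ℝ≥0∞} (hp : 0 < p.toReal) {f : ∀ i, E i} (hf : Memℓp f p) {ε : ℝ} (hε : 0 < ε) :
    {i | ε ≤ ‖f i‖}.Finite := by
  have hsmall : ∀ᶠ i in cofinite, ‖f i‖ ^ p.toReal < ε ^ p.toReal :=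
    (hf.summable hp).tendsto_cofinite_zero.eventually_lt_const (Real.rpow_pos_of_pos hε _)
  refine (eventually_cofinite.mp hsmall).subset fun i hi => ?_
  exact not_lt.mpr (Real.rpow_le_rpow hε.le hi hp.le)

theorem finite_setOf_le_abs_apply_single (φ : ellTwo →L[ℝ] ℝ) {ε : ℝ} (hε : 0 < ε) :
    {k | ε ≤ |φ (lp.single 2 k 1)|}.Finite := by
  set v := (InnerProductSpace.toDual ℝ ellTwo).symm φ
  have hv : ∀ k, φ (lp.single 2 k 1) = v k := fun k => by
    rw [← InnerProductSpace.toDual_symm_apply, lp.inner_single_right]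
    simp [v]
  simpa only [hv, Real.norm_eq_abs] using
    (lp.memℓp v).finite_setOf_le_norm (by norm_num) hε

theorem le_abs_of_forall_le_abs_add {w x I E : ℝ} (hx : x ≠ 0)
    (h : ∀ c, w * |x| ≤ c * I + c ^ 2 * E / 2 + w * |x + c|) : w ≤ |I| := by
  wlog hpos : 0 < x generalizing x I
  · have hreflect := this (x := -x) (I := -I) (neg_ne_zero.mpr hx) (fun c => by
      have hc := h (-c)
      rw [abs_neg, show -x + c = -(x + -c) by ring, abs_neg]
      ring_nf at hc ⊢
      linarith) (neg_pos.mpr ((not_lt.mp hpos).lt_of_ne hx))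
    rwa [abs_neg] at hreflect
  have hbound : ∀ t ∈ Set.Ioc 0 x, w ≤ -I + t * (E / 2) := by
    rintro t ⟨ht0, htx⟩
    have := h (-t)
    rw [abs_of_pos hpos, abs_of_nonneg (by linarith : 0 ≤ x + -t)] at this
    nlinarith
  have hlim : Tendsto (fun t => -I + t * (E / 2)) (𝓝[>] 0) (𝓝 (-I)) :=
    ((by fun_prop : Continuous fun t : ℝ => -I + t * (E / 2)).tendsto' 0 (-I) (by simp)).mono_left
      nhdsWithin_le_nhds
  calc w ≤ -I := ge_of_tendsto hlim (mem_of_superset (Ioc_mem_nhdsGT hpos) hbound)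
    _ ≤ |I| := neg_le_abs I

section Psi

variable {H : Type*} [NormedAddCommGroup H] [InnerProductSpace ℝ H] (K : ellTwo →L[ℝ] H) (f : H)
  {w : ℕ → ℝ}

theorem Psi_zero : Psi K f w 0 = ENNReal.ofReal (‖f‖ ^ 2 / 2) := by
  simp [Psi]

theorem Psi_eq_ofReal_add_tsum_ite {k : ℕ} (hwk : 0 ≤ w k) (u : ellTwo) :
    Psi K f w u = ENNReal.ofReal (‖K u - f‖ ^ 2 / 2 + w k * |u k|) +
      ∑' j, if j = k then 0 else ENNReal.ofReal (w j * |u j|) := by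
  rw [Psi, ENNReal.summable.tsum_eq_add_tsum_ite' k,
    ENNReal.ofReal_add (by positivity) (by positivity), add_assoc]

theorem le_of_Psi_le_of_eq_of_ne {k : ℕ} (hwk : 0 ≤ w k) {u v : ellTwo} (hv : Psi K f w v ≠ ⊤)
    (hvu : Psi K f w v ≤ Psi K f w u) (huv : ∀ j ≠ k, u j = v j) :
    ‖K v - f‖ ^ 2 / 2 + w k * |v k| ≤ ‖K u - f‖ ^ 2 / 2 + w k * |u k| := by
  have htail : (∑' j, if j = k then 0 else ENNReal.ofReal (w j * |u j|)) =
      ∑' j, if j = k then 0 else ENNReal.ofReal (w j * |v j|) :=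
    tsum_congr fun j => by by_cases hj : j = k <;> simp [hj, huv]
  rw [Psi_eq_ofReal_add_tsum_ite K f hwk] at hv hvu
  rw [Psi_eq_ofReal_add_tsum_ite K f hwk, htail] at hvu
  exact (ENNReal.ofReal_le_ofReal_iff (by positivity)).mp
    ((ENNReal.add_le_add_iff_right (ENNReal.add_ne_top.mp hv).2).mp hvu)

theorem le_abs_inner_of_forall_Psi_le {ubar : ellTwo} (hmin : ∀ u, Psi K f w ubar ≤ Psi K f w u)
    {k : ℕ} (hwk : 0 ≤ w k) (hk : ubar k ≠ 0) :
    w k ≤ |inner ℝ (K ubar - f) (K (lp.single 2 k 1))| := by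
  have hfin : Psi K f w ubar ≠ ⊤ :=
    ne_top_of_le_ne_top (by rw [Psi_zero]; exact ENNReal.ofReal_ne_top) (hmin 0)
  set e : ellTwo := lp.single 2 k 1
  refine le_abs_of_forall_le_abs_add (E := ‖K e‖ ^ 2) hk fun c => ?_
  have hperturb := le_of_Psi_le_of_eq_of_ne K f hwk hfin (hmin (ubar + c • e))
    fun j hj => by
      rw [lp.coeFn_add, lp.coeFn_smul, Pi.add_apply, Pi.smul_apply, lp.single_apply_ne _ _ _ hj,
        smul_zero, add_zero]
  rw [map_add, map_smul, add_sub_right_comm, norm_add_sq_real, real_inner_smul_right, norm_smul,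
    mul_pow, Real.norm_eq_abs, sq_abs] at hperturb
  have hk_coord : (ubar + c • e) k = ubar k + c := by
    rw [lp.coeFn_add, lp.coeFn_smul, Pi.add_apply, Pi.smul_apply, lp.single_apply_self, smul_eq_mul,
      mul_one]
  rw [hk_coord] at hperturb
  linarith

end Psi

theorem stmt_12_general {H : Type*} [NormedAddCommGroup H] [InnerProductSpace ℝ H]
    (K : ellTwo →L[ℝ] H) (f : H)
    (w : ℕ → ℝ) (w0 : ℝ) (hw0 : 0 < w0) (hw : ∀ k, w0 ≤ w k)
    (ubar : ellTwo) (hmin : ∀ u : ellTwo, Psi K f w ubar ≤ Psi K f w u) :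
    {k | ubar k ≠ 0}.Finite :=
  (finite_setOf_le_abs_apply_single ((innerSL ℝ (K ubar - f)).comp K) hw0).subset fun k hk =>
    (hw k).trans (le_abs_inner_of_forall_Psi_le K f hmin (hw0.le.trans (hw k)) hk)

/-- The minimizer of the Tikhonov functional with sparsity constraints is a
finitely supported sequence. -/
theorem stmt_12 {H : Type*} [NormedAddCommGroup H] [InnerProductSpace ℝ H]
    [CompleteSpace H]
    (K : ellTwo →L[ℝ] H) (hK : Function.Injective K) (f : H)
    (w : ℕ → ℝ) (w0 : ℝ) (hw0 : 0 < w0) (hw : ∀ k, w0 ≤ w k)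
    (ubar : ellTwo) (hmin : ∀ u : ellTwo, Psi K f w ubar ≤ Psi K f w u) :
    {k | ubar k ≠ 0}.Finite :=
  stmt_12_general K f w w0 hw0 hw ubar hmin
end

section
/- For u, p, w, γ real with w ≥ 0 and γ > 0, the following are equivalent: (i) u = max(0, u + γ(p - w)) + min(0, u + γ(p + w)); (ii) either u = 0 and |p| ≤ w, or u > 0 and p = w, or u < 0 and p = -w. (Scalar equivalence of the semismooth reformulation of the complementarity system.) -/
/-- Scalar equivalence of the semismooth reformulation of the complementarity
system: for `w ≥ 0`, `γ > 0`,
`u = max(0, u + γ(p - w)) + min(0, u + γ(p + w))` holds iff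
(`u = 0` and `|p| ≤ w`) or (`u > 0` and `p = w`) or (`u < 0` and `p = -w`). -/
theorem stmt_13 (u p w γ : ℝ) (hw : 0 ≤ w) (hγ : 0 < γ) :
    u = max 0 (u + γ * (p - w)) + min 0 (u + γ * (p + w)) ↔
      ((u = 0 ∧ |p| ≤ w) ∨ (0 < u ∧ p = w) ∨ (u < 0 ∧ p = -w)) := by
  have hγ' := hγ.ne'
  constructor
  · intro h
    rcases le_total (u + γ * (p - w)) 0 with h1 | h1 <;>
    rcases le_total (u + γ * (p + w)) 0 with h2 | h2
    · rw [max_eq_left h1, min_eq_right h2, zero_add] at h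
      have hpw : p = -w := by
        have : γ * (p + w) = 0 := by linarith
        have := (mul_eq_zero.mp this).resolve_left hγ'
        linarith
      rcases lt_or_eq_of_le (h ▸ h2 : u ≤ 0) with hu | hu
      · exact Or.inr (Or.inr ⟨hu, hpw⟩)
      · exact Or.inl ⟨hu, by rw [hpw, abs_neg, abs_of_nonneg hw]⟩
    · rw [max_eq_left h1, min_eq_left h2, zero_add] at h
      refine Or.inl ⟨h, abs_le.mpr ⟨by nlinarith, by nlinarith⟩⟩
    · -- 0 ≤ a ≤ b ≤ 0
      have hab : u + γ * (p - w) ≤ u + γ * (p + w) := by nlinarith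
      rw [max_eq_right h1, min_eq_right h2] at h
      have hu0 : u = 0 := by nlinarith
      refine Or.inl ⟨hu0, abs_le.mpr ⟨by nlinarith, by nlinarith⟩⟩
    · rw [max_eq_right h1, min_eq_left h2, add_zero] at h
      have hpw : p = w := by
        have : γ * (p - w) = 0 := by linarith
        have := (mul_eq_zero.mp this).resolve_left hγ'
        linarith
      rcases lt_or_eq_of_le (h ▸ h1 : 0 ≤ u) with hu | hu
      · exact Or.inr (Or.inl ⟨hu, hpw⟩)
      · exact Or.inl ⟨hu.symm, by rw [hpw, abs_of_nonneg hw]⟩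
  · rintro (⟨hu, hp⟩ | ⟨hu, hp⟩ | ⟨hu, hp⟩)
    · obtain ⟨hp1, hp2⟩ := abs_le.mp hp
      rw [max_eq_left (by nlinarith), min_eq_left (by nlinarith), zero_add, hu]
    · rw [hp, max_eq_right (by nlinarith), min_eq_left (by nlinarith)]
      ring
    · rw [hp, max_eq_left (by nlinarith), min_eq_right (by nlinarith), zero_add]
      ring
end

section
/- Uniform localization of active sets: let K : ℓ² → H be bounded linear, f ∈ H, γ > 0, w_k ≥ w_0 > 0, and ū ∈ ℓ². Then there exist k₀ ∈ ℕ and ρ > 0 such that for all u ∈ ℓ² with ‖u - ū‖₂ < ρ, the active set A(u) = {k : |(u - γK*(Ku - f))_k| > γw_k} is contained in {1, …, k₀}. -/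
open scoped ENNReal

/-!
The coordinates of the image of `ū` under the gradient step `u ↦ u - γK*(Ku - f)` tend to `0`,
so beyond some `k₀` they stay below `γ w₀ / 2`. The gradient step is continuous and every
coordinate is dominated by the `ℓ²` norm, so for `u` near `ū` the coordinates beyond `k₀` stay
below `γ w₀ ≤ γ w_k`, and no such `k` is active.
-/

open Filter Topology

theorem lp.tendsto_norm_apply_atTop {E : ℕ → Type*} [∀ i, NormedAddCommGroup (E i)]
    {p : ℝ≥0∞} (hp0 : p ≠ 0) (hp : p ≠ ∞) (f : lp E p) :
    Tendsto (fun k => ‖f k‖) atTop (𝓝 0) := by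
  have hpos : 0 < p.toReal := ENNReal.toReal_pos hp0 hp
  have hpow : Tendsto (fun k => ‖f k‖ ^ p.toReal) atTop (𝓝 0) :=
    ((lp.memℓp f).summable hpos).tendsto_atTop_zero
  simpa [← Real.rpow_mul (norm_nonneg _), hpos.ne', Real.zero_rpow (inv_ne_zero hpos.ne')]
    using hpow.rpow_const (p := p.toReal⁻¹) (Or.inr (inv_nonneg.2 hpos.le))

theorem ContinuousAt.exists_eventually_norm_lp_apply_lt {X : Type*} [TopologicalSpace X]
    {E : ℕ → Type*} [∀ i, NormedAddCommGroup (E i)] {p : ℝ≥0∞} [Fact (1 ≤ p)] (hp : p ≠ ∞)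
    {g : X → lp E p} {x : X} (hg : ContinuousAt g x) {c : ℝ} (hc : 0 < c) :
    ∃ k₀, ∀ᶠ u in 𝓝 x, ∀ k, k₀ ≤ k → ‖g u k‖ < c := by
  have hp0 : p ≠ 0 := (zero_lt_one.trans_le Fact.out).ne'
  obtain ⟨k₀, hk₀⟩ := eventually_atTop.1 <|
    (lp.tendsto_norm_apply_atTop hp0 hp (g x)).eventually (gt_mem_nhds (half_pos hc))
  refine ⟨k₀, (Metric.tendsto_nhds.1 hg (c / 2) (half_pos hc)).mono fun u hu k hk => ?_⟩
  calc ‖g u k‖ ≤ ‖(g u - g x) k‖ + ‖g x k‖ := by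
        simpa [lp.coeFn_sub] using norm_le_norm_sub_add (g u k) (g x k)
    _ ≤ ‖g u - g x‖ + ‖g x k‖ := by gcongr; exact lp.norm_apply_le_norm hp0 _ k
    _ < c / 2 + c / 2 := by rw [← dist_eq_norm]; exact add_lt_add hu (hk₀ k hk)
    _ = c := add_halves c

/-- Uniform localization of active sets: there exist `k₀` and `ρ > 0` such that
`‖u - ū‖₂ < ρ` implies `A(u) = {k : |(u - γK*(Ku - f))_k| > γ w_k} ⊆ {0, …, k₀}`. -/
theorem stmt_17 {H : Type*} [NormedAddCommGroup H] [InnerProductSpace ℝ H]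
    [CompleteSpace H]
    (K : ellTwo →L[ℝ] H) (f : H) (γ : ℝ) (hγ : 0 < γ)
    (w : ℕ → ℝ) (w0 : ℝ) (hw0 : 0 < w0) (hw : ∀ k, w0 ≤ w k) (ubar : ellTwo) :
    ∃ k₀ : ℕ, ∃ ρ > (0 : ℝ), ∀ u : ellTwo, ‖u - ubar‖ < ρ →
      ∀ k : ℕ, γ * w k <
          |u k - γ * (ContinuousLinearMap.adjoint K (K u - f)) k| → k ≤ k₀ := by
  set gradStep : ellTwo → ellTwo := fun u => u - γ • ContinuousLinearMap.adjoint K (K u - f)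
  have hcont : Continuous gradStep := by fun_prop
  obtain ⟨k₀, hk₀⟩ := hcont.continuousAt.exists_eventually_norm_lp_apply_lt (x := ubar)
    ENNReal.ofNat_ne_top (mul_pos hγ hw0)
  obtain ⟨ρ, hρ, hball⟩ := Metric.eventually_nhds_iff.1 hk₀
  refine ⟨k₀, ρ, hρ, fun u hu k hk => ?_⟩
  by_contra! hlt
  have hsmall : |u k - γ * (ContinuousLinearMap.adjoint K (K u - f)) k| < γ * w0 :=
    hball (dist_eq_norm u ubar ▸ hu) k hlt.le
  linarith [mul_le_mul_of_nonneg_left (hw k) hγ.le]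
end
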